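/- Let t ≥ 1/√2 and ε = +1. Then (0,0) is a strict global maximum of F_{t,+1}: F_{t,+1}(p) < F_{t,+1}(0,0) = 0 for every p ∈ ℝ² with p ≠ (0,0). -/
import Mathlib


/-- The Karigiannis–Leung Chern–Simons type functional, evaluated on the
connections A = i(a₁η₁ + a₂η₂ + a₃η₃) on the trivial complex line bundle over a
compact 3-Sasakian 7-manifold with the coclosed G₂-structure φ_{t,ε}
(normalized so that Vol(X, g^{ts}) = 1), with x = a₃ and y² = a₁² + a₂²:
F_{t,ε}(x,y) = −[(x² + y²)(2(x² + y²) − 1) + 2t²(x² + εy²)]. -/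
def F (t ε : ℝ) : ℝ × ℝ → ℝ := fun p =>
  -((p.1 ^ 2 + p.2 ^ 2) * (2 * (p.1 ^ 2 + p.2 ^ 2) - 1) + 2 * t ^ 2 * (p.1 ^ 2 + ε * p.2 ^ 2))

/-- For t ≥ 1/√2 and ε = +1, the origin (the trivial flat connection) is a
strict global maximum of F_{t,+1}, with F_{t,+1}(0,0) = 0. -/
theorem stmt_13 (t : ℝ) (ht : 1 / Real.sqrt 2 ≤ t) :
    F t 1 (0, 0) = 0 ∧
    ∀ p : ℝ × ℝ, p ≠ (0, 0) → F t 1 p < F t 1 (0, 0) := by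
  have h2 : (0:ℝ) < Real.sqrt 2 := Real.sqrt_pos.2 (by norm_num)
  have ht0 : (0:ℝ) < t := lt_of_lt_of_le (by positivity) ht
  have ht2 : (1:ℝ)/2 ≤ t ^ 2 := by
    have := mul_self_le_mul_self (le_of_lt (by positivity : (0:ℝ) < 1/Real.sqrt 2)) ht
    have hs : (1/Real.sqrt 2) * (1/Real.sqrt 2) = 1/2 := by
      rw [div_mul_div_comm, one_mul, Real.mul_self_sqrt (by norm_num)]
    nlinarith [this]
  constructor
  · simp [F]
  · rintro ⟨x, y⟩ hp
    have hs : 0 < x ^ 2 + y ^ 2 := by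
      have : x ≠ 0 ∨ y ≠ 0 := by
        by_contra h; push_neg at h; exact hp (by simp [h.1, h.2])
      rcases this with h | h <;> positivity
    simp only [F]
    nlinarith [sq_nonneg x, sq_nonneg y, sq_nonneg (x^2+y^2)]
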